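/- arXiv:0707.3108 — 3 statements merged into one kernel-verified Lean document; each statement's English description precedes it below -/
import Mathlib

section
/- Let A be a finitely generated commutative algebra with a rational action of G × K^×, where G is reductive, such that the graded algebra of G-invariants A^G has no negative graded components. Then for every dominant weight λ, the isotypic component A_λ is a graded subspace whose grading is bounded from below; consequently every finite-dimensional G × K^×-submodule of A[[ħ]] lies in A[ħ]. -/
/-!
Let `M` be a finite-dimensional representation of `G`. The equivariant maps `M → A` span a
finitely generated `A`-submodule of `Hom_K(M, A) ≅ A^{dim M}`; choose finitely many homogeneous
equivariant generators `m` and let `N` be their least degree. An equivariant `ψ` of degree `i < N`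
is then `∑ γ_m • m` with `γ_m` of negative degree `i - deg m`. The map `z ↦ ∑ z_m • m` takes the
value `ψ` on the whole `G`-orbit of `γ ∈ A^T`, while the span of that orbit lies in negative degrees
and so contains no invariants; by complete reducibility of `A^T` this forces `ψ = 0`.

For `M = L(λ)` this bounds the degrees of `A_λ` from below. For a finite-dimensional
`G × K^×`-stable `M ⊆ A[[ħ]]` it bounds from below the degrees of all coefficients of elements of
`M`; on the other hand the degree-`j` part of the `ħ^n`-coefficient has `K^×`-weight `kn + j`, and
only finitely many weights occur in `M`, which bounds `n`.
-/

open scoped Classical Polynomial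

namespace Representation

variable {K G X Y : Type*} [Field K] [Group G] [AddCommGroup X] [Module K X]
  [AddCommGroup Y] [Module K Y]

def IsCompletelyReducible (π : Representation K G X) : Prop :=
  ∀ U ∈ π.invtSubmodule, ∃ C ∈ π.invtSubmodule, IsCompl U C

theorem mem_invtSubmodule_iff_forall_mem {π : Representation K G X} {U : Submodule K X} :
    U ∈ π.invtSubmodule ↔ ∀ g, ∀ x ∈ U, π g x ∈ U := by
  simp only [mem_invtSubmodule, Module.End.mem_invtSubmodule_iff_forall_mem_of_mem]

def ofAlgEquivHom {A : Type*} [Semiring A] [Algebra K A] (ρ : G →* (A ≃ₐ[K] A)) :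
    Representation K G A :=
  (AlgEquiv.toLinearMapHom K A).comp ρ

@[simp]
theorem ofAlgEquivHom_apply {A : Type*} [Semiring A] [Algebra K A] (ρ : G →* (A ≃ₐ[K] A))
    (g : G) (a : A) : ofAlgEquivHom ρ g a = ρ g a := rfl

def pi (π : Representation K G X) (α : Type*) : Representation K G (α → X) where
  toFun g := LinearMap.compLeft (π g) α
  map_one' := by ext; simp
  map_mul' g h := by ext; simp

@[simp]
theorem pi_apply (π : Representation K G X) (α : Type*) (g : G) (z : α → X) (a : α) :
    π.pi α g z a = π g (z a) := rfl

noncomputable def powerSeries {A : Type*} [CommRing A] [Algebra K A] (ρ : G →* (A ≃ₐ[K] A)) :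
    Representation K G (PowerSeries A) where
  toFun g := (PowerSeries.mapAlgHom (ρ g : A →ₐ[K] A)).toLinearMap
  map_one' := by ext F n; simp [PowerSeries.mapAlgHom_apply]
  map_mul' g h := by ext F n; simp [PowerSeries.mapAlgHom_apply]

@[simp]
theorem coeff_powerSeries_apply {A : Type*} [CommRing A] [Algebra K A] (ρ : G →* (A ≃ₐ[K] A))
    (g : G) (F : PowerSeries A) (n : ℕ) :
    PowerSeries.coeff n (powerSeries ρ g F) = ρ g (PowerSeries.coeff n F) := by
  simp [powerSeries, PowerSeries.mapAlgHom_apply]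

namespace IsCompletelyReducible

variable {π : Representation K G X} {τ : Representation K G Y}

theorem of_linearEquiv (e : X ≃ₗ[K] Y) (he : ∀ g x, e (π g x) = τ g (e x))
    (hπ : π.IsCompletelyReducible) : τ.IsCompletelyReducible := by
  intro U hU
  rw [mem_invtSubmodule_iff_forall_mem] at hU
  obtain ⟨C, hC, hUC⟩ := hπ (U.comap e.toLinearMap) <|
    mem_invtSubmodule_iff_forall_mem.mpr fun g x (hx : e x ∈ U) =>
      show e (π g x) ∈ U from he g x ▸ hU g (e x) hx
  rw [mem_invtSubmodule_iff_forall_mem] at hC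
  refine ⟨C.map e.toLinearMap, mem_invtSubmodule_iff_forall_mem.mpr ?_, ?_⟩
  · rintro g _ ⟨x, hx, rfl⟩
    exact ⟨π g x, hC g x hx, he g x⟩
  · simpa [Submodule.map_comap_eq_of_surjective e.surjective] using
      (Submodule.orderIsoMapComap e).isCompl hUC

theorem prod (hπ : π.IsCompletelyReducible) (hτ : τ.IsCompletelyReducible) :
    (π.prod τ).IsCompletelyReducible := by
  intro U hU
  rw [mem_invtSubmodule_iff_forall_mem] at hU
  obtain ⟨C₁, hC₁, hUC₁⟩ := hπ (U.comap (LinearMap.inl K X Y)) <|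
    mem_invtSubmodule_iff_forall_mem.mpr fun g x hx => by simpa using hU g _ hx
  obtain ⟨C₂, hC₂, hUC₂⟩ := hτ (U.map (LinearMap.snd K X Y)) <|
    mem_invtSubmodule_iff_forall_mem.mpr fun g _ ⟨u, hu, hy⟩ => ⟨_, hU g u hu, by simp [← hy]⟩
  rw [mem_invtSubmodule_iff_forall_mem] at hC₁ hC₂
  refine ⟨C₁.prod C₂, mem_invtSubmodule_iff_forall_mem.mpr fun g x hx =>
    ⟨hC₁ g _ hx.1, hC₂ g _ hx.2⟩, ?_, ?_⟩
  · rw [Submodule.disjoint_def]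
    rintro ⟨a, b⟩ hU' ⟨ha, hb⟩
    have hb0 : b = 0 := Submodule.disjoint_def.mp hUC₂.disjoint b ⟨_, hU', rfl⟩ hb
    subst hb0
    have ha0 : a = 0 := Submodule.disjoint_def.mp hUC₁.disjoint a hU' ha
    simp [ha0]
  · rw [codisjoint_iff, eq_top_iff]
    rintro ⟨x, y⟩ -
    obtain ⟨_, ⟨u, hu, rfl⟩, c₂, hc₂, rfl⟩ :=
      Submodule.mem_sup.mp (hUC₂.sup_eq_top ▸ Submodule.mem_top : y ∈ _ ⊔ C₂)
    obtain ⟨u₁, hu₁, c₁, hc₁, hx⟩ :=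
      Submodule.mem_sup.mp (hUC₁.sup_eq_top ▸ Submodule.mem_top : x - u.1 ∈ _ ⊔ C₁)
    have hsplit : ((x, u.2 + c₂) : X × Y) = (u + (u₁, 0)) + (c₁, c₂) := by
      ext
      · simp only [Prod.fst_add, add_assoc, hx, add_sub_cancel]
      · simp
    change (x, u.2 + c₂) ∈ _
    rw [hsplit]
    exact Submodule.add_mem_sup (U.add_mem hu hu₁) ⟨hc₁, hc₂⟩

theorem pi (hπ : π.IsCompletelyReducible) (α : Type*) [Finite α] :
    (π.pi α).IsCompletelyReducible := by
  induction α using Finite.induction_empty_option with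
  | of_equiv e ih =>
    exact ih.of_linearEquiv (LinearEquiv.funCongrLeft K X e.symm) fun _ _ => rfl
  | h_empty =>
    intro U _
    exact ⟨⊥, invtSubmodule.bot_mem _, Subsingleton.elim ⊤ U ▸ isCompl_top_bot⟩
  | h_option ih =>
    exact (hπ.prod ih).of_linearEquiv (LinearEquiv.piOptionEquivProd (R := K)).symm
      fun g z => by ext (_ | _) <;> rfl

theorem map_eq_zero_of_map_orbit_eq (hπ : π.IsCompletelyReducible) (Φ : X →ₗ[K] Y) (x : X)
    (hΦ : ∀ g, Φ (π g x) = Φ x)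
    (hfix : ∀ z ∈ Submodule.span K (Set.range fun g => π g x), (∀ g, π g z = z) → z = 0) :
    Φ x = 0 := by
  set Z := Submodule.span K (Set.range fun g => π g x)
  have hxZ : x ∈ Z := Submodule.subset_span ⟨1, by simp⟩
  have hZ : ∀ g, ∀ z ∈ Z, π g z ∈ Z ∧ Φ (π g z) = Φ z := by
    intro g
    suffices Z ≤ Z.comap (π g) ⊓ LinearMap.eqLocus (Φ ∘ₗ π g) Φ from fun z hz => this hz
    refine Submodule.span_le.mpr (Set.range_subset_iff.mpr fun h => ⟨?_, ?_⟩)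
    · exact Submodule.subset_span ⟨g * h, by simp⟩
    · simp [← Module.End.mul_apply, ← map_mul, hΦ]
  obtain ⟨C, hC, hWC⟩ := hπ (Z ⊓ LinearMap.ker Φ) <| mem_invtSubmodule_iff_forall_mem.mpr
    fun g w ⟨hwZ, hw⟩ => ⟨(hZ g w hwZ).1, by simpa [(hZ g w hwZ).2] using hw⟩
  rw [mem_invtSubmodule_iff_forall_mem] at hC
  -- `G` acts trivially on `Z ⊓ C`, as `π g z - z` lies in `Z ⊓ ker Φ` and in `C`.
  have hZC : ∀ z ∈ Z, z ∈ C → z = 0 := fun z hz hzC => hfix z hz fun g => by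
    have hmem : π g z - z ∈ (Z ⊓ LinearMap.ker Φ) ⊓ C :=
      ⟨⟨Z.sub_mem (hZ g z hz).1 hz, by simp [(hZ g z hz).2]⟩, C.sub_mem (hC g z hzC) hzC⟩
    rw [hWC.inf_eq_bot] at hmem
    exact sub_eq_zero.mp hmem
  obtain ⟨w, ⟨hwZ, hw⟩, c, hc, rfl⟩ :=
    Submodule.mem_sup.mp (hWC.sup_eq_top ▸ Submodule.mem_top : x ∈ _ ⊔ C)
  have hc0 : c = 0 := hZC c (by simpa using Z.sub_mem hxZ hwZ) hc
  simpa [hc0] using hw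

end IsCompletelyReducible

end Representation

namespace GradedAlgebra

variable {K A : Type*} [Field K] [CommRing A] [Algebra K A] (𝒜 : ℤ → Submodule K A)
  [GradedAlgebra 𝒜]

theorem proj_map_algEquiv (e : A ≃ₐ[K] A) (he : ∀ i, ∀ a ∈ 𝒜 i, e a ∈ 𝒜 i) (i : ℤ) (a : A) :
    proj 𝒜 i (e a) = e (proj 𝒜 i a) :=
  (GradedRingHom.map_directSumDecompose 𝒜 𝒜 ⟨e.toRingHom, he _ _⟩).symm

theorem proj_mul_of_mem_right {j : ℤ} {x : A} (hx : x ∈ 𝒜 j) (i : ℤ) (c : A) :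
    proj 𝒜 i (c * x) = proj 𝒜 (i - j) c * x := by
  rw [proj_apply, proj_apply, ← DirectSum.coe_decompose_mul_add_of_right_mem 𝒜 hx,
    sub_add_cancel]

theorem proj_sum_smul_decompose (c : ℤ → K) (a : A) (j : ℤ) :
    proj 𝒜 j ((DirectSum.decompose 𝒜 a).sum fun i x => c i • (x : A)) = c j • proj 𝒜 j a := by
  rw [DFinsupp.sum, map_sum, Finset.sum_eq_single j]
  · simp [proj_apply]
  · intro i _ hij
    rw [map_smul, proj_apply, DirectSum.decompose_coe, DirectSum.of_eq_of_ne _ _ _ (Ne.symm hij),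
      ZeroMemClass.coe_zero, smul_zero]
  · intro hj
    simp [proj_apply, DFinsupp.notMem_support_iff.mp hj]

end GradedAlgebra

theorem Submodule.IsHomogeneous.eq_iSup_inf {K A : Type*} [Field K] [CommRing A] [Algebra K A]
    {𝒜 : ℤ → Submodule K A} [GradedAlgebra 𝒜] {p : Submodule K A} (hp : p.IsHomogeneous 𝒜) :
    p = ⨆ i, p ⊓ 𝒜 i := by
  refine le_antisymm (fun a ha => ?_) (iSup_le fun _ => inf_le_left)
  rw [← DirectSum.sum_support_decompose 𝒜 a]
  exact Submodule.sum_mem _ fun i _ => Submodule.mem_iSup_of_mem i ⟨hp i ha, SetLike.coe_mem _⟩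

theorem Submodule.isHomogeneous_iSup_range {K A V : Type*} [Field K] [CommRing A] [Algebra K A]
    {𝒜 : ℤ → Submodule K A} [GradedAlgebra 𝒜] [AddCommGroup V] [Module K V]
    (S : Set (V →ₗ[K] A)) (hS : ∀ f ∈ S, ∀ j, GradedAlgebra.proj 𝒜 j ∘ₗ f ∈ S) :
    (⨆ f ∈ S, LinearMap.range f).IsHomogeneous 𝒜 := by
  intro j x hx
  suffices h : ⨆ f ∈ S, LinearMap.range f ≤
      (⨆ f ∈ S, LinearMap.range f).comap (GradedAlgebra.proj 𝒜 j) from h hx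
  refine iSup₂_le fun f hf => ?_
  rw [← Submodule.map_le_iff_le_comap, ← LinearMap.range_comp]
  exact le_iSup₂_of_le (f := fun f _ => LinearMap.range f) _ (hS f hf j) le_rfl

theorem Submodule.iSup_range_inf_eq_bot {K A V : Type*} [Field K] [CommRing A] [Algebra K A]
    {𝒜 : ℤ → Submodule K A} [GradedAlgebra 𝒜] [AddCommGroup V] [Module K V]
    (S : Set (V →ₗ[K] A)) {i : ℤ} (hS : ∀ f ∈ S, ∀ v, GradedAlgebra.proj 𝒜 i (f v) = 0) :
    (⨆ f ∈ S, LinearMap.range f) ⊓ 𝒜 i = ⊥ := by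
  have hker : ⨆ f ∈ S, LinearMap.range f ≤ LinearMap.ker (GradedAlgebra.proj 𝒜 i) :=
    iSup₂_le fun f hf => LinearMap.range_le_ker_iff.mpr (LinearMap.ext (hS f hf))
  rw [eq_bot_iff]
  rintro x ⟨hx, hxi⟩
  rw [Submodule.mem_bot, ← DirectSum.decompose_of_mem_same 𝒜 hxi]
  exact hker hx

section BoundedBelow

variable {K A G M : Type*} [Field K] [CommRing A] [Algebra K A] [Group G]
  (𝒜 : ℤ → Submodule K A) (ρ : G →* (A ≃ₐ[K] A))
  [AddCommGroup M] [Module K M] (σ : Representation K G M)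

def homogeneousEquivariantMaps (i : ℤ) : Set (M →ₗ[K] A) :=
  {ψ | (∀ g v, ψ (σ g v) = ρ g (ψ v)) ∧ ∀ v, ψ v ∈ 𝒜 i}

theorem exists_finset_homogeneousEquivariantMaps_span [Algebra.FiniteType K A]
    [FiniteDimensional K M] :
    ∃ (T : Finset (M →ₗ[K] A)) (d : (M →ₗ[K] A) → ℤ),
      (∀ m ∈ T, m ∈ homogeneousEquivariantMaps 𝒜 ρ σ (d m)) ∧
      ∀ i, homogeneousEquivariantMaps 𝒜 ρ σ i ⊆ Submodule.span A (T : Set (M →ₗ[K] A)) := by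
  have : IsNoetherianRing A := Algebra.FiniteType.isNoetherianRing K A
  obtain ⟨T, hTsub, hspan⟩ := (Submodule.fg_span_iff_fg_span_finset_subset _).mp
    (IsNoetherian.noetherian (Submodule.span A (⋃ i, homogeneousEquivariantMaps 𝒜 ρ σ i)))
  choose! d hd using fun m (hm : m ∈ T) => Set.mem_iUnion.mp (hTsub hm)
  exact ⟨T, d, hd, fun i => hspan ▸ (Set.subset_iUnion _ i).trans Submodule.subset_span⟩

theorem exists_homogeneous_coeffs_of_mem_span [GradedAlgebra 𝒜] {T : Finset (M →ₗ[K] A)}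
    {d : (M →ₗ[K] A) → ℤ} (hT : ∀ m ∈ T, ∀ v, m v ∈ 𝒜 (d m)) {i : ℤ} {ψ : M →ₗ[K] A}
    (hψ : ∀ v, ψ v ∈ 𝒜 i)
    (hψT : ψ ∈ Submodule.span A (T : Set (M →ₗ[K] A))) :
    ∃ γ : (M →ₗ[K] A) → A, (∀ m ∈ T, γ m ∈ 𝒜 (i - d m)) ∧ ψ = ∑ m ∈ T, γ m • m := by
  obtain ⟨c, -, rfl⟩ := Submodule.mem_span_finset.mp hψT
  refine ⟨fun m => GradedAlgebra.proj 𝒜 (i - d m) (c m), fun m _ => ?_, ?_⟩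
  · simp [GradedAlgebra.proj_apply]
  · ext v
    rw [← DirectSum.decompose_of_mem_same 𝒜 (hψ v)]
    simp only [LinearMap.sum_apply, LinearMap.smul_apply, smul_eq_mul, ← GradedAlgebra.proj_apply,
      map_sum]
    exact Finset.sum_congr rfl fun m hm => GradedAlgebra.proj_mul_of_mem_right 𝒜 (hT m hm v) i _

theorem eq_zero_of_eq_sum_smul_of_coeff_neg
    (hred : (Representation.ofAlgEquivHom ρ).IsCompletelyReducible)
    (hρ𝒜 : ∀ g i, ∀ a ∈ 𝒜 i, ρ g a ∈ 𝒜 i)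
    (hinv : ∀ i < 0, ∀ a ∈ 𝒜 i, (∀ g, ρ g a = a) → a = 0)
    {T : Finset (M →ₗ[K] A)} (hT : ∀ m ∈ T, ∀ g v, m (σ g v) = ρ g (m v))
    {e : (M →ₗ[K] A) → ℤ} (he : ∀ m ∈ T, e m < 0) {γ : (M →ₗ[K] A) → A}
    (hγ : ∀ m ∈ T, γ m ∈ 𝒜 (e m)) {ψ : M →ₗ[K] A} (hψ : ∀ g v, ψ (σ g v) = ρ g (ψ v))
    (hψT : ψ = ∑ m ∈ T, γ m • m) : ψ = 0 := by
  set π := (Representation.ofAlgEquivHom ρ).pi T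
  set Φ : (T → A) →ₗ[K] (M →ₗ[K] A) :=
    (Fintype.linearCombination A fun m : T => (m : M →ₗ[K] A)).restrictScalars K
  have hΦ : ∀ g, Φ (π g fun m => γ m) = ψ := by
    intro g
    ext v
    have hσ : σ g (σ g⁻¹ v) = v := by simp [← Module.End.mul_apply, ← map_mul]
    conv_rhs => rw [← hσ, hψ, hψT]
    simp only [Φ, π, LinearMap.restrictScalars_apply, Fintype.linearCombination_apply,
      Representation.pi_apply, Representation.ofAlgEquivHom_apply, LinearMap.sum_apply,
      LinearMap.smul_apply, smul_eq_mul, map_sum, map_mul]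
    rw [Finset.sum_coe_sort T fun m => ρ g (γ m) * m v]
    exact Finset.sum_congr rfl fun m hm => by rw [← hT m hm, hσ]
  have hΦ1 : Φ (fun m => γ m) = ψ := by simpa using hΦ 1
  rw [← hΦ1]
  refine (hred.pi T).map_eq_zero_of_map_orbit_eq Φ _ (fun g => (hΦ g).trans hΦ1.symm) ?_
  intro z hz hzfix
  have hzdeg : z ∈ Submodule.pi Set.univ fun m : T => 𝒜 (e m) := by
    refine Submodule.span_le.mpr ?_ hz
    rintro _ ⟨g, rfl⟩ m -
    exact hρ𝒜 g _ _ (hγ m m.2)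
  funext m
  exact hinv _ (he m m.2) _ (hzdeg m trivial) fun g => congrFun (hzfix g) m

theorem proj_comp_apply_eq_of_equivariant [GradedAlgebra 𝒜]
    (hρ𝒜 : ∀ g i, ∀ a ∈ 𝒜 i, ρ g a ∈ 𝒜 i) {ψ : M →ₗ[K] A}
    (hψ : ∀ g v, ψ (σ g v) = ρ g (ψ v)) (i : ℤ) (g : G) (v : M) :
    (GradedAlgebra.proj 𝒜 i ∘ₗ ψ) (σ g v) = ρ g ((GradedAlgebra.proj 𝒜 i ∘ₗ ψ) v) := by
  simp [hψ, GradedAlgebra.proj_map_algEquiv 𝒜 (ρ g) (hρ𝒜 g)]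

theorem exists_proj_apply_eq_zero_of_lt [GradedAlgebra 𝒜] [Algebra.FiniteType K A]
    [FiniteDimensional K M] (hred : (Representation.ofAlgEquivHom ρ).IsCompletelyReducible)
    (hρ𝒜 : ∀ g i, ∀ a ∈ 𝒜 i, ρ g a ∈ 𝒜 i)
    (hinv : ∀ i < 0, ∀ a ∈ 𝒜 i, (∀ g, ρ g a = a) → a = 0) :
    ∃ N : ℤ, ∀ ψ : M →ₗ[K] A, (∀ g v, ψ (σ g v) = ρ g (ψ v)) →
      ∀ i < N, ∀ v, GradedAlgebra.proj 𝒜 i (ψ v) = 0 := by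
  obtain ⟨T, d, hTd, hspan⟩ := exists_finset_homogeneousEquivariantMaps_span 𝒜 ρ σ
  obtain ⟨N, hN⟩ := (T.image d).bddBelow
  refine ⟨N, fun ψ hψ i hi v => ?_⟩
  have hψi : GradedAlgebra.proj 𝒜 i ∘ₗ ψ ∈ homogeneousEquivariantMaps 𝒜 ρ σ i :=
    ⟨proj_comp_apply_eq_of_equivariant 𝒜 ρ σ hρ𝒜 hψ i,
      fun v => by simp [GradedAlgebra.proj_apply]⟩
  obtain ⟨γ, hγ, hψiT⟩ :=
    exists_homogeneous_coeffs_of_mem_span 𝒜 (fun m hm => (hTd m hm).2) hψi.2 (hspan i hψi)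
  have hneg : ∀ m ∈ T, i - d m < 0 := fun m hm => by
    have := hN (Finset.mem_image_of_mem d hm)
    omega
  exact LinearMap.congr_fun (eq_zero_of_eq_sum_smul_of_coeff_neg 𝒜 ρ σ hred hρ𝒜 hinv
    (fun m hm => (hTd m hm).1) hneg hγ hψi.1 hψiT) v

end BoundedBelow

theorem Polynomial.exists_ne_zero_isRoot_of_apply_eq_pow_smul {K V Y ι : Type*} [Field K]
    [AddCommGroup V] [Module K V] [AddCommGroup Y] [Module K Y] (W : Submodule K V)
    [FiniteDimensional K W]
    (x : ℕ → V) (hx : ∀ l, x l ∈ W) (y : V) (π : ι → V →ₗ[K] Y) (c : ι → K)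
    (hπ : ∀ i l, π i (x l) = c i ^ l • π i y) :
    ∃ q : K[X], q ≠ 0 ∧ ∀ i, π i y ≠ 0 → q.IsRoot (c i) := by
  obtain ⟨s, a, hsum, l₀, hl₀, hal₀⟩ := not_linearIndependent_iff.mp <|
    Module.Finite.not_linearIndependent_of_infinite (R := K) fun l => (⟨x l, hx l⟩ : W)
  refine ⟨∑ l ∈ s, monomial l (a l), fun hq => hal₀ ?_, fun i hi => ?_⟩
  · simpa [finsetSum_coeff, coeff_monomial, hl₀] using congrArg (coeff · l₀) hq
  · have := congrArg (π i ∘ₗ W.subtype) hsum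
    simp only [map_sum, map_smul, LinearMap.comp_apply, Submodule.subtype_apply, hπ, smul_smul,
      ← Finset.sum_smul, map_zero, smul_eq_zero, hi, or_false] at this
    simpa [IsRoot, eval_finsetSum, mul_comm] using this

theorem Polynomial.finite_setOf_isRoot_two_zpow {K : Type*} [Field K] [CharZero K] {q : K[X]}
    (hq : q ≠ 0) : {e : ℤ | q.IsRoot ((2 : K) ^ e)}.Finite := by
  have hinj : Function.Injective fun e : ℤ => (2 : K) ^ e := by
    have := (Rat.cast_injective (α := K)).comp
      (zpow_right_injective₀ (two_pos : (0 : ℚ) < 2) (by norm_num))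
    simpa [Function.comp_def] using this
  exact (finite_setOfPred_isRoot hq).preimage hinj.injOn

theorem PowerSeries.exists_coeff_eq_zero_of_torus_stable {K A : Type*} [Field K] [CharZero K]
    [CommRing A] [Algebra K A] (𝒜 : ℤ → Submodule K A) [GradedAlgebra 𝒜] {k : ℕ} (hk : 0 < k)
    (τ : Kˣ → PowerSeries A → PowerSeries A)
    (hτ : ∀ t F n j, GradedAlgebra.proj 𝒜 j (coeff n (τ t F)) =
      ((t ^ (k * n) * t ^ j : Kˣ) : K) • GradedAlgebra.proj 𝒜 j (coeff n F))
    (M : Submodule K (PowerSeries A)) [FiniteDimensional K M] (hMτ : ∀ t, ∀ F ∈ M, τ t F ∈ M)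
    {N₀ : ℤ} (hN₀ : ∀ F ∈ M, ∀ n, ∀ j < N₀, GradedAlgebra.proj 𝒜 j (coeff n F) = 0)
    {F : PowerSeries A} (hF : F ∈ M) : ∃ N : ℕ, ∀ n ≥ N, coeff n F = 0 := by
  set u : Kˣ := Units.mk0 2 two_ne_zero
  have hu : ∀ e : ℤ, ((u ^ e : Kˣ) : K) = 2 ^ e := fun e => by simp [u]
  obtain ⟨q, hq, hroot⟩ := Polynomial.exists_ne_zero_isRoot_of_apply_eq_pow_smul M
    (fun l => τ (u ^ l) F) (fun l => hMτ _ F hF) F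
    (fun p : ℕ × ℤ => GradedAlgebra.proj 𝒜 p.2 ∘ₗ (coeff (R := A) p.1).restrictScalars K)
    (fun p => 2 ^ ((k * p.1 : ℕ) + p.2 : ℤ)) fun p l => by
      simp only [LinearMap.comp_apply, LinearMap.restrictScalars_apply, hτ]
      congr 1
      rw [← zpow_natCast u l, ← zpow_natCast (u ^ (l : ℤ)), ← zpow_mul, ← zpow_mul, ← zpow_add,
        hu, ← zpow_natCast ((2 : K) ^ _) l, ← zpow_mul]
      congr 1
      push_cast
      ring
  obtain ⟨B, hB⟩ := (Polynomial.finite_setOf_isRoot_two_zpow hq).bddAbove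
  refine ⟨(B - N₀).toNat + 1, fun n hn => ?_⟩
  have hproj : ∀ j, GradedAlgebra.proj 𝒜 j (coeff n F) = 0 := fun j => by
    by_contra hj
    have hjN : N₀ ≤ j := not_lt.mp fun hlt => hj (hN₀ F hF n j hlt)
    have hkn : ((k * n : ℕ) : ℤ) + j ≤ B := hB (hroot (n, j) hj)
    have : n ≤ k * n := Nat.le_mul_of_pos_left n hk
    omega
  rw [← DirectSum.sum_support_decompose 𝒜 (coeff n F)]
  exact Finset.sum_eq_zero fun j _ => hproj j

theorem PowerSeries.exists_coeff_eq_zero_of_stable {K A G : Type*} [Field K] [CharZero K]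
    [CommRing A] [Algebra K A] [Algebra.FiniteType K A] [Group G] (𝒜 : ℤ → Submodule K A)
    [GradedAlgebra 𝒜] (ρ : G →* (A ≃ₐ[K] A))
    (hred : (Representation.ofAlgEquivHom ρ).IsCompletelyReducible)
    (hρ𝒜 : ∀ g i, ∀ a ∈ 𝒜 i, ρ g a ∈ 𝒜 i)
    (hinv : ∀ i < 0, ∀ a ∈ 𝒜 i, (∀ g, ρ g a = a) → a = 0) {k : ℕ} (hk : 0 < k)
    (τ : Kˣ → PowerSeries A → PowerSeries A)
    (hτ : ∀ t F n j, GradedAlgebra.proj 𝒜 j (coeff n (τ t F)) =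
      ((t ^ (k * n) * t ^ j : Kˣ) : K) • GradedAlgebra.proj 𝒜 j (coeff n F))
    (M : Submodule K (PowerSeries A)) [FiniteDimensional K M]
    (hMρ : ∀ g, ∀ F ∈ M, Representation.powerSeries ρ g F ∈ M) (hMτ : ∀ t, ∀ F ∈ M, τ t F ∈ M)
    {F : PowerSeries A} (hF : F ∈ M) : ∃ N : ℕ, ∀ n ≥ N, coeff n F = 0 := by
  obtain ⟨N, hN⟩ := exists_proj_apply_eq_zero_of_lt 𝒜 ρ
    ((Representation.powerSeries ρ).subrepresentation M hMρ) hred hρ𝒜 hinv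
  exact exists_coeff_eq_zero_of_torus_stable 𝒜 hk τ hτ M hMτ
    (fun F hF n j hj => hN ((coeff n).restrictScalars K ∘ₗ M.subtype) (fun g v => by simp) j hj
      ⟨F, hF⟩) hF

theorem stmt_6_general (K A : Type*) [Field K] [CharZero K]
    [CommRing A] [Algebra K A] [Algebra.FiniteType K A]
    (G : Type*) [Group G] (ρ : G →* (A ≃ₐ[K] A))
    (𝒜 : ℤ → Submodule K A) [GradedAlgebra 𝒜]
    (hGgr : ∀ (g : G) (i : ℤ), (𝒜 i).map (ρ g).toLinearMap = 𝒜 i)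
    -- complete reducibility (reductivity of `G`)
    (hred : ∀ W : Submodule K A, (∀ g : G, W.map (ρ g).toLinearMap ≤ W) →
      ∃ W' : Submodule K A, (∀ g : G, W'.map (ρ g).toLinearMap ≤ W') ∧ IsCompl W W')
    -- `A^G` has no negative graded components
    (hinvpos : ∀ i : ℤ, i < 0 → ∀ a ∈ 𝒜 i, (∀ g : G, ρ g a = a) → a = 0)
    -- a finite-dimensional irreducible `G`-module (`L(λ)` for a dominant weight `λ`)
    (Vt : Type*) [AddCommGroup Vt] [Module K Vt] [FiniteDimensional K Vt]
    (σv : G →* (Vt ≃ₗ[K] Vt))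
    -- the weight of the `K^×`-action on `ħ`
    (k : ℕ) (hk : 0 < k) :
    -- `A_λ`: the isotypic component of type `Vt`
    let Aiso : Submodule K A := ⨆ (f : Vt →ₗ[K] A) (_ : ∀ (g : G) (v : Vt),
      f (σv g v) = ρ g (f v)), LinearMap.range f
    -- the `G`-action on `A[[ħ]]`, coefficientwise
    let gAct : G → PowerSeries A → PowerSeries A := fun g F =>
      PowerSeries.mk fun n => ρ g (PowerSeries.coeff (R := A) n F)
    -- the `K^×`-action on `A[[ħ]]`: `t · (a ħ^n) = t^{kn} (t·a) ħ^n`, where `t` acts on `a ∈ 𝒜 i`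
    -- by `t^i`
    let tAct : Kˣ → PowerSeries A → PowerSeries A := fun t F =>
      PowerSeries.mk fun n => ((t ^ (k * n : ℕ) : Kˣ) : K) •
        ((DirectSum.decompose 𝒜 (PowerSeries.coeff (R := A) n F)).sum
          fun i x => ((t ^ i : Kˣ) : K) • (x : A))
    -- (1) the isotypic component `A_λ` is graded with grading bounded from below
    (∃ N : ℤ, (∀ i : ℤ, i < N → Aiso ⊓ 𝒜 i = ⊥) ∧ Aiso = ⨆ i : ℤ, Aiso ⊓ 𝒜 i) ∧
    -- (2) every finite-dimensional `G × K^×`-stable subspace of `A[[ħ]]` lies in `A[ħ]`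
    (∀ M : Submodule K (PowerSeries A), FiniteDimensional K M →
      (∀ (g : G), ∀ F ∈ M, gAct g F ∈ M) → (∀ (t : Kˣ), ∀ F ∈ M, tAct t F ∈ M) →
      ∀ F ∈ M, ∃ N : ℕ, ∀ n : ℕ, N ≤ n → PowerSeries.coeff (R := A) n F = 0) := by
  intro Aiso gAct tAct
  have hρ𝒜 : ∀ g i, ∀ a ∈ 𝒜 i, ρ g a ∈ 𝒜 i := fun g i a ha =>
    hGgr g i ▸ Submodule.mem_map_of_mem ha
  have hred' : (Representation.ofAlgEquivHom ρ).IsCompletelyReducible := by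
    intro U hU
    simp only [Representation.mem_invtSubmodule, Module.End.mem_invtSubmodule_iff_map_le] at hU ⊢
    exact hred U hU
  refine ⟨?_, fun M hM hMg hMt F hF => ?_⟩
  · set σ : Representation K G Vt := LinearEquiv.automorphismGroup.toLinearMapMonoidHom.comp σv
    set S : Set (Vt →ₗ[K] A) := {f | ∀ g v, f (σ g v) = ρ g (f v)}
    have hAiso : Aiso = ⨆ f ∈ S, LinearMap.range f := rfl
    obtain ⟨N, hN⟩ := exists_proj_apply_eq_zero_of_lt 𝒜 ρ σ hred' hρ𝒜 hinvpos
    rw [hAiso]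
    exact ⟨N, fun i hi => Submodule.iSup_range_inf_eq_bot S fun f hf => hN f hf i hi,
      (Submodule.isHomogeneous_iSup_range S fun f hf =>
        proj_comp_apply_eq_of_equivariant 𝒜 ρ σ hρ𝒜 hf).eq_iSup_inf⟩
  · refine PowerSeries.exists_coeff_eq_zero_of_stable 𝒜 ρ hred' hρ𝒜 hinvpos hk tAct
      (fun t F n j => ?_) M (fun g F hF => ?_) hMt hF
    · simp only [tAct, PowerSeries.coeff_mk, map_smul,
        GradedAlgebra.proj_sum_smul_decompose 𝒜 fun i => ((t ^ i : Kˣ) : K), smul_smul,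
        Units.val_mul]
    · convert hMg g F hF using 1
      ext n
      simp [gAct]

/-- Losev, Proposition 2.1.2.  Let `A` be a finitely generated commutative algebra with a
rational action of `G × K^×` (`G` reductive, encoded via complete reducibility of the action on
`A`; the `K^×`-action gives the `ℤ`-grading `𝒜`), such that `A^G` has no negative graded
components.  Then for every (dominant weight `λ`, i.e. every finite-dimensional irreducible
`G`-module `Vt`) the isotypic component `A_λ` is a graded subspace whose grading is bounded from
below; consequently every finite-dimensional `G × K^×`-submodule of `A[[ħ]]` lies in `A[ħ]`
(here `K^×` acts on `ħ` with a positive weight `k`). -/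
theorem stmt_6 (K A : Type*) [Field K] [IsAlgClosed K] [CharZero K]
    [CommRing A] [Algebra K A] [Algebra.FiniteType K A]
    (G : Type*) [Group G] (ρ : G →* (A ≃ₐ[K] A))
    (𝒜 : ℤ → Submodule K A) [GradedAlgebra 𝒜]
    (hGgr : ∀ (g : G) (i : ℤ), (𝒜 i).map (ρ g).toLinearMap = 𝒜 i)
    -- rationality of the action
    (hrat : ∀ a : A, ∃ W : Submodule K A, FiniteDimensional K W ∧
      (∀ g : G, W.map (ρ g).toLinearMap ≤ W) ∧ a ∈ W)
    -- complete reducibility (reductivity of `G`)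
    (hred : ∀ W : Submodule K A, (∀ g : G, W.map (ρ g).toLinearMap ≤ W) →
      ∃ W' : Submodule K A, (∀ g : G, W'.map (ρ g).toLinearMap ≤ W') ∧ IsCompl W W')
    -- `A^G` has no negative graded components
    (hinvpos : ∀ i : ℤ, i < 0 → ∀ a ∈ 𝒜 i, (∀ g : G, ρ g a = a) → a = 0)
    -- a finite-dimensional irreducible `G`-module (`L(λ)` for a dominant weight `λ`)
    (Vt : Type*) [AddCommGroup Vt] [Module K Vt] [FiniteDimensional K Vt] [Nontrivial Vt]
    (σv : G →* (Vt ≃ₗ[K] Vt))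
    (hirr : ∀ U : Submodule K Vt, (∀ (g : G), ∀ v ∈ U, σv g v ∈ U) → U = ⊥ ∨ U = ⊤)
    -- the weight of the `K^×`-action on `ħ`
    (k : ℕ) (hk : 0 < k) :
    -- `A_λ`: the isotypic component of type `Vt`
    let Aiso : Submodule K A := ⨆ (f : Vt →ₗ[K] A) (_ : ∀ (g : G) (v : Vt),
      f (σv g v) = ρ g (f v)), LinearMap.range f
    -- the `G`-action on `A[[ħ]]`, coefficientwise
    let gAct : G → PowerSeries A → PowerSeries A := fun g F =>
      PowerSeries.mk fun n => ρ g (PowerSeries.coeff (R := A) n F)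
    -- the `K^×`-action on `A[[ħ]]`: `t · (a ħ^n) = t^{kn} (t·a) ħ^n`, where `t` acts on `a ∈ 𝒜 i`
    -- by `t^i`
    let tAct : Kˣ → PowerSeries A → PowerSeries A := fun t F =>
      PowerSeries.mk fun n => ((t ^ (k * n : ℕ) : Kˣ) : K) •
        ((DirectSum.decompose 𝒜 (PowerSeries.coeff (R := A) n F)).sum
          fun i x => ((t ^ i : Kˣ) : K) • (x : A))
    -- (1) the isotypic component `A_λ` is graded with grading bounded from below
    (∃ N : ℤ, (∀ i : ℤ, i < N → Aiso ⊓ 𝒜 i = ⊥) ∧ Aiso = ⨆ i : ℤ, Aiso ⊓ 𝒜 i) ∧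
    -- (2) every finite-dimensional `G × K^×`-stable subspace of `A[[ħ]]` lies in `A[ħ]`
    (∀ M : Submodule K (PowerSeries A), FiniteDimensional K M →
      (∀ (g : G), ∀ F ∈ M, gAct g F ∈ M) → (∀ (t : Kˣ), ∀ F ∈ M, tAct t F ∈ M) →
      ∀ F ∈ M, ∃ N : ℕ, ∀ n : ℕ, N ≤ n → PowerSeries.coeff (R := A) n F = 0) :=
  stmt_6_general K A G ρ 𝒜 hGgr hred hinvpos Vt σv k hk
end

section
/- The algebra A^♥ (the degree-bounded completion of a polynomial quantum algebra) is a Noetherian domain. -/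
noncomputable section

variable (K : Type*) [Field K] (σ : Type*) [Fintype σ]

/-- The weighted degree of a monomial, for generators of degrees `d j`. -/
def wdeg (d : σ → ℤ) (m : σ →₀ ℕ) : ℤ := m.sum fun j k => (k : ℤ) * d j

/-- `f` has all its monomials of weighted degree at most `c`. -/
def DegBounded (d : σ → ℤ) (f : MvPowerSeries σ K) (c : ℤ) : Prop :=
  ∀ m : σ →₀ ℕ, c < wdeg σ d m → MvPowerSeries.coeff (R := K) m f = 0

/-- The homogeneous component of weighted degree `c` of a formal power series. -/
def wcomp (d : σ → ℤ) (c : ℤ) (f : MvPowerSeries σ K) : MvPowerSeries σ K :=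
  fun m => if wdeg σ d m = c then MvPowerSeries.coeff (R := K) m f else 0

end

/-!
Every nonzero `ψ x` has a top homogeneous component, and `hsymb` makes taking it multiplicative;
since `K[[σ]]` is a domain, so is `B`.

For Noetherianity, send a left ideal `I` of `B` to the ideal of `K[[σ]]` spanned by the top
components of its elements. If `I ≤ J` have the same symbol ideal, finitely many symbols of
elements `yᵢ ∈ I` generate it, because `K[[σ]]` is Noetherian. Any `x ∈ J` can then be reduced
modulo the `yᵢ` one degree at a time. The homogeneous corrections of decreasing degree add up to
degree-bounded series, hence (by surjectivity of `ψ` onto those) to elements `Xᵢ ∈ B`, and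
`x = ∑ Xᵢ yᵢ ∈ I`. So the symbol ideal is strictly monotone in `I`, and ascending chains of left
ideals of `B` stabilise.
-/

open MvPowerSeries Finset

section WeightedComponents

variable {K : Type*} [Field K] {σ : Type*} {d : σ → ℤ}

variable (d) in
def IsWHomogeneous (f : MvPowerSeries σ K) (a : ℤ) : Prop :=
  ∀ m : σ →₀ ℕ, wdeg σ d m ≠ a → coeff m f = 0

theorem wdeg_add (p q : σ →₀ ℕ) : wdeg σ d (p + q) = wdeg σ d p + wdeg σ d q :=
  Finsupp.sum_add_index' (by simp) (fun _ _ _ => by push_cast; ring)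

theorem coeff_wcomp (a : ℤ) (f : MvPowerSeries σ K) (m : σ →₀ ℕ) :
    coeff m (wcomp K σ d a f) = if wdeg σ d m = a then coeff m f else 0 := rfl

theorem wcomp_add (a : ℤ) (f g : MvPowerSeries σ K) :
    wcomp K σ d a (f + g) = wcomp K σ d a f + wcomp K σ d a g := by
  ext m
  simp only [map_add, coeff_wcomp]
  split_ifs <;> simp

theorem wcomp_zero (a : ℤ) : wcomp K σ d a 0 = 0 :=
  map_zero (AddMonoidHom.mk' (wcomp K σ d a) (wcomp_add a))

theorem wcomp_sub (a : ℤ) (f g : MvPowerSeries σ K) :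
    wcomp K σ d a (f - g) = wcomp K σ d a f - wcomp K σ d a g :=
  map_sub (AddMonoidHom.mk' (wcomp K σ d a) (wcomp_add a)) f g

theorem wcomp_sum {ι : Type*} (a : ℤ) (s : Finset ι) (F : ι → MvPowerSeries σ K) :
    wcomp K σ d a (∑ i ∈ s, F i) = ∑ i ∈ s, wcomp K σ d a (F i) :=
  map_sum (AddMonoidHom.mk' (wcomp K σ d a) (wcomp_add a)) F s

theorem isWHomogeneous_wcomp (a : ℤ) (f : MvPowerSeries σ K) :
    IsWHomogeneous d (wcomp K σ d a f) a := fun m hm => by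
  rw [coeff_wcomp, if_neg hm]

namespace IsWHomogeneous

variable {f : MvPowerSeries σ K} {a : ℤ}

theorem degBounded (hf : IsWHomogeneous d f a) : DegBounded K σ d f a :=
  fun m hm => hf m hm.ne'

theorem wcomp_eq (hf : IsWHomogeneous d f a) : wcomp K σ d a f = f := by
  ext m
  rw [coeff_wcomp]
  split_ifs with hm
  · rfl
  · exact (hf m hm).symm

end IsWHomogeneous

namespace DegBounded

variable {f g : MvPowerSeries σ K} {a : ℤ}

theorem sub (hf : DegBounded K σ d f a) (hg : DegBounded K σ d g a) :
    DegBounded K σ d (f - g) a := fun m hm => by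
  rw [map_sub, hf m hm, hg m hm, sub_zero]

theorem sum {ι : Type*} {s : Finset ι} {F : ι → MvPowerSeries σ K}
    (hF : ∀ i ∈ s, DegBounded K σ d (F i) a) : DegBounded K σ d (∑ i ∈ s, F i) a :=
  fun m hm => by
    rw [map_sum]
    exact sum_eq_zero fun i hi => hF i hi m hm

theorem sub_one_of_wcomp_eq_zero (hf : DegBounded K σ d f a) (h0 : wcomp K σ d a f = 0) :
    DegBounded K σ d f (a - 1) := fun m hm => by
  rcases (show a ≤ wdeg σ d m by omega).lt_or_eq with hlt | heq
  · exact hf m hlt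
  · simpa [coeff_wcomp, heq] using congrArg (coeff m) h0

end DegBounded

variable (d) in
theorem eq_zero_of_forall_degBounded {f : MvPowerSeries σ K} (c : ℤ)
    (hf : ∀ n : ℕ, DegBounded K σ d f (c - n)) : f = 0 := by
  ext m
  rw [map_zero]
  exact hf (c - wdeg σ d m + 1).toNat m (by omega)

theorem exists_degBounded_wcomp_ne_zero {f : MvPowerSeries σ K} {c : ℤ}
    (hf : DegBounded K σ d f c) (hf0 : f ≠ 0) :
    ∃ a, DegBounded K σ d f a ∧ wcomp K σ d a f ≠ 0 := by
  by_contra! htop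
  refine hf0 (eq_zero_of_forall_degBounded d c fun n => ?_)
  induction n with
  | zero => simpa using hf
  | succ n ih => simpa [sub_sub] using ih.sub_one_of_wcomp_eq_zero (htop _ ih)

theorem wcomp_mul_of_isWHomogeneous {t : MvPowerSeries σ K} {e : ℤ} (ht : IsWHomogeneous d t e)
    (a : ℤ) (h : MvPowerSeries σ K) : wcomp K σ d a (h * t) = wcomp K σ d (a - e) h * t := by
  classical
  ext m
  rw [coeff_wcomp, coeff_mul, coeff_mul]
  split_ifs with hm
  · refine sum_congr rfl fun pq hpq => ?_
    by_cases hq : wdeg σ d pq.2 = e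
    · have := wdeg_add (d := d) pq.1 pq.2
      rw [mem_antidiagonal.mp hpq] at this
      rw [coeff_wcomp, if_pos (by omega)]
    · rw [ht _ hq, mul_zero, mul_zero]
  · refine (sum_eq_zero fun pq hpq => ?_).symm
    by_cases hq : wdeg σ d pq.2 = e
    · have := wdeg_add (d := d) pq.1 pq.2
      rw [mem_antidiagonal.mp hpq] at this
      rw [coeff_wcomp, if_neg (by omega), zero_mul]
    · rw [ht _ hq, mul_zero]

theorem exists_isWHomogeneous_of_mem_span {ι : Type*} [Fintype ι] {s : ι → MvPowerSeries σ K}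
    {e : ι → ℤ} (hs : ∀ i, IsWHomogeneous d (s i) (e i)) {f : MvPowerSeries σ K} {a : ℤ}
    (hf : IsWHomogeneous d f a) (hmem : f ∈ Ideal.span (Set.range s)) :
    ∃ h : ι → MvPowerSeries σ K, (∀ i, IsWHomogeneous d (h i) (a - e i)) ∧ ∑ i, h i * s i = f := by
  obtain ⟨c, hc⟩ := Ideal.mem_span_range_iff_exists_fun.mp hmem
  refine ⟨fun i => wcomp K σ d (a - e i) (c i), fun i => isWHomogeneous_wcomp _ _, ?_⟩
  calc ∑ i, wcomp K σ d (a - e i) (c i) * s i = ∑ i, wcomp K σ d a (c i * s i) := by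
        simp only [wcomp_mul_of_isWHomogeneous (hs _)]
    _ = f := by rw [← wcomp_sum, hc, hf.wcomp_eq]

theorem exists_degBounded_sub_sum_range {g : ℕ → MvPowerSeries σ K} {c : ℤ}
    (hg : ∀ n : ℕ, IsWHomogeneous d (g n) (c - n)) :
    ∃ G : MvPowerSeries σ K, ∀ n : ℕ, DegBounded K σ d (G - ∑ k ∈ range n, g k) (c - n) := by
  have hvanish : ∀ (m : σ →₀ ℕ) (N : ℕ), c - N < wdeg σ d m → ∀ k ≥ N, coeff m (g k) = 0 :=
    fun m N hN k hk => hg k m (by omega)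
  let G : MvPowerSeries σ K := fun m => ∑ k ∈ range (c - wdeg σ d m + 1).toNat, coeff m (g k)
  refine ⟨G, fun n m hm => ?_⟩
  have hN : c - ((c - wdeg σ d m + 1).toNat : ℕ) < wdeg σ d m := by omega
  rw [map_sub, map_sum, sub_eq_zero, eventually_constant_sum (hvanish m _ hN) (by omega)]
  rfl

end WeightedComponents

section Model

variable {K : Type*} [Field K] {σ : Type*} {d : σ → ℤ} {B : Type*} [Ring B] [Module K B]
  {ψ : B →ₗ[K] MvPowerSeries σ K}

variable (d ψ) in
def HasMultiplicativeSymbol : Prop :=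
  ∀ (x y : B) (c e : ℤ), DegBounded K σ d (ψ x) c → DegBounded K σ d (ψ y) e →
    DegBounded K σ d (ψ (x * y)) (c + e) ∧
      wcomp K σ d (c + e) (ψ (x * y)) = wcomp K σ d c (ψ x) * wcomp K σ d e (ψ y)

theorem exists_sub_sum_mul_degBounded
    (hsurj : ∀ f : MvPowerSeries σ K, (∃ c : ℤ, DegBounded K σ d f c) → ∃ x : B, ψ x = f)
    (hsymb : HasMultiplicativeSymbol d ψ) {ι : Type*} [Fintype ι] {y : ι → B} {e : ι → ℤ}
    (hy : ∀ i, DegBounded K σ d (ψ (y i)) (e i)) {w : B} {a : ℤ} (hw : DegBounded K σ d (ψ w) a)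
    (hmem : wcomp K σ d a (ψ w) ∈ Ideal.span (Set.range fun i => wcomp K σ d (e i) (ψ (y i)))) :
    ∃ z : ι → B, (∀ i, IsWHomogeneous d (ψ (z i)) (a - e i)) ∧
      DegBounded K σ d (ψ (w - ∑ i, z i * y i)) (a - 1) := by
  obtain ⟨h, hh, hsum⟩ := exists_isWHomogeneous_of_mem_span
    (fun i => isWHomogeneous_wcomp (e i) _) (isWHomogeneous_wcomp a _) hmem
  choose z hz using fun i => hsurj (h i) ⟨_, (hh i).degBounded⟩
  have hprod : ∀ i, DegBounded K σ d (ψ (z i * y i)) a ∧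
      wcomp K σ d a (ψ (z i * y i)) = h i * wcomp K σ d (e i) (ψ (y i)) := by
    intro i
    have := hsymb (z i) (y i) _ _ (by rw [hz]; exact (hh i).degBounded) (hy i)
    rwa [sub_add_cancel, hz, (hh i).wcomp_eq] at this
  refine ⟨z, fun i => hz i ▸ hh i, ?_⟩
  rw [map_sub, map_sum]
  refine (hw.sub (DegBounded.sum fun i _ => (hprod i).1)).sub_one_of_wcomp_eq_zero ?_
  rw [wcomp_sub, wcomp_sum, sum_congr rfl fun i _ => (hprod i).2, hsum, sub_self]

theorem exists_seq_sub_sum_mul_degBounded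
    (hsurj : ∀ f : MvPowerSeries σ K, (∃ c : ℤ, DegBounded K σ d f c) → ∃ x : B, ψ x = f)
    (hsymb : HasMultiplicativeSymbol d ψ) {ι : Type*} [Fintype ι] {y : ι → B} {e : ι → ℤ}
    (hy : ∀ i, DegBounded K σ d (ψ (y i)) (e i)) {I : Ideal B} (hyI : ∀ i, y i ∈ I)
    (hspan : ∀ w ∈ I, ∀ a, DegBounded K σ d (ψ w) a →
      wcomp K σ d a (ψ w) ∈ Ideal.span (Set.range fun i => wcomp K σ d (e i) (ψ (y i))))
    {x : B} (hx : x ∈ I) {c : ℤ} (hc : DegBounded K σ d (ψ x) c) :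
    ∃ z : ℕ → ι → B, (∀ n i, IsWHomogeneous d (ψ (z n i)) (c - n - e i)) ∧
      ∀ n : ℕ, DegBounded K σ d (ψ (x - ∑ i, (∑ k ∈ range n, z k i) * y i)) (c - n) := by
  -- `∃ z` comes before the hypotheses on `w` so that `choose` gives a function of `n` and `w` only
  have step : ∀ (n : ℕ) (w : B), ∃ z : ι → B, w ∈ I ∧ DegBounded K σ d (ψ w) (c - n) →
      (∀ i, IsWHomogeneous d (ψ (z i)) (c - n - e i)) ∧
        DegBounded K σ d (ψ (w - ∑ i, z i * y i)) (c - n - 1) := by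
    intro n w
    by_cases hw : w ∈ I ∧ DegBounded K σ d (ψ w) (c - n)
    · obtain ⟨z, hz⟩ := exists_sub_sum_mul_degBounded hsurj hsymb hy hw.2 (hspan w hw.1 _ hw.2)
      exact ⟨z, fun _ => hz⟩
    · exact ⟨0, fun h => absurd h hw⟩
  choose Z hZ using step
  let r : ℕ → B := fun n => Nat.rec x (fun n w => w - ∑ i, Z n w i * y i) n
  have hr : ∀ n : ℕ, r n ∈ I ∧ DegBounded K σ d (ψ (r n)) (c - n) := by
    intro n
    induction n with
    | zero => simpa [r] using ⟨hx, hc⟩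
    | succ n ih =>
      refine ⟨I.sub_mem ih.1 (I.sum_mem fun i _ => I.mul_mem_left _ (hyI i)), ?_⟩
      have := (hZ n (r n) ih).2
      rwa [sub_sub, ← Nat.cast_add_one] at this
  have hpartial : ∀ n : ℕ, x - ∑ i, (∑ k ∈ range n, Z k (r k) i) * y i = r n := by
    intro n
    induction n with
    | zero => simp [r]
    | succ n ih =>
      simp only [sum_range_succ, add_mul, sum_add_distrib, ← sub_sub, ih]
      rfl
  exact ⟨fun n => Z n (r n), fun n => (hZ n (r n) (hr n)).1,
    fun n => hpartial n ▸ (hr n).2⟩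

theorem mem_span_of_forall_wcomp_mem_span (hinj : Function.Injective ψ)
    (hsurj : ∀ f : MvPowerSeries σ K, (∃ c : ℤ, DegBounded K σ d f c) → ∃ x : B, ψ x = f)
    (hsymb : HasMultiplicativeSymbol d ψ) {ι : Type*} [Fintype ι] {y : ι → B} {e : ι → ℤ}
    (hy : ∀ i, DegBounded K σ d (ψ (y i)) (e i)) {I : Ideal B} (hyI : ∀ i, y i ∈ I)
    (hspan : ∀ w ∈ I, ∀ a, DegBounded K σ d (ψ w) a →
      wcomp K σ d a (ψ w) ∈ Ideal.span (Set.range fun i => wcomp K σ d (e i) (ψ (y i))))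
    {x : B} (hx : x ∈ I) {c : ℤ} (hc : DegBounded K σ d (ψ x) c) :
    x ∈ Ideal.span (Set.range y) := by
  obtain ⟨z, hz, hrem⟩ := exists_seq_sub_sum_mul_degBounded hsurj hsymb hy hyI hspan hx hc
  choose G hG using fun i => exists_degBounded_sub_sum_range (g := fun k => ψ (z k i))
    (c := c - e i) fun n => by simpa only [sub_right_comm] using hz n i
  choose X hX using fun i => hsurj (G i) ⟨_, by simpa using hG i 0⟩
  suffices hxX : ψ (x - ∑ i, X i * y i) = 0 by
    rw [map_eq_zero_iff ψ hinj, sub_eq_zero] at hxX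
    exact Ideal.mem_span_range_iff_exists_fun.mpr ⟨X, hxX.symm⟩
  refine eq_zero_of_forall_degBounded d c fun n => ?_
  have htail : ∀ i, DegBounded K σ d (ψ ((X i - ∑ k ∈ range n, z k i) * y i)) (c - n) := by
    intro i
    have hXi : DegBounded K σ d (ψ (X i - ∑ k ∈ range n, z k i)) (c - e i - n) := by
      simpa only [map_sub, map_sum, hX] using hG i n
    have := (hsymb _ _ _ _ hXi (hy i)).1
    rwa [sub_right_comm, sub_add_cancel] at this
  have hsplit : x - ∑ i, X i * y i =
      (x - ∑ i, (∑ k ∈ range n, z k i) * y i) - ∑ i, (X i - ∑ k ∈ range n, z k i) * y i := by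
    simp only [sub_mul, sum_sub_distrib]
    abel
  rw [hsplit, map_sub, map_sum]
  exact (hrem n).sub (DegBounded.sum fun i _ => htail i)

variable (d ψ) in
noncomputable def symbolIdeal (I : Ideal B) : Ideal (MvPowerSeries σ K) :=
  Ideal.span {s | ∃ v ∈ I, ∃ a : ℤ, DegBounded K σ d (ψ v) a ∧ wcomp K σ d a (ψ v) = s}

theorem wcomp_mem_symbolIdeal {I : Ideal B} {v : B} (hv : v ∈ I) {a : ℤ}
    (ha : DegBounded K σ d (ψ v) a) : wcomp K σ d a (ψ v) ∈ symbolIdeal d ψ I :=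
  Ideal.subset_span ⟨v, hv, a, ha, rfl⟩

theorem symbolIdeal_mono : Monotone (symbolIdeal d ψ) := fun _ _ hII' =>
  Ideal.span_mono fun _ ⟨v, hv, a, ha, hs⟩ => ⟨v, hII' hv, a, ha, hs⟩

theorem le_of_symbolIdeal_le [Finite σ] (hinj : Function.Injective ψ)
    (hbdd : ∀ x : B, ∃ c : ℤ, DegBounded K σ d (ψ x) c)
    (hsurj : ∀ f : MvPowerSeries σ K, (∃ c : ℤ, DegBounded K σ d f c) → ∃ x : B, ψ x = f)
    (hsymb : HasMultiplicativeSymbol d ψ) {I J : Ideal B} (hIJ : I ≤ J)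
    (hJI : symbolIdeal d ψ J ≤ symbolIdeal d ψ I) : J ≤ I := by
  obtain ⟨T, hTS, hT⟩ := (Submodule.fg_span_iff_fg_span_finset_subset _).mp
    (IsNoetherian.noetherian (symbolIdeal d ψ I))
  choose y hyI e hy hye using fun t : T => hTS t.2
  have hrange : Set.range (fun t => wcomp K σ d (e t) (ψ (y t))) = T := by
    simp only [hye, Subtype.range_coe_subtype, Finset.setOfPred_mem]
  intro x hx
  obtain ⟨c, hc⟩ := hbdd x
  refine Ideal.span_le.mpr (Set.range_subset_iff.mpr hyI) <|
    mem_span_of_forall_wcomp_mem_span hinj hsurj hsymb hy (fun t => hIJ (hyI t))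
      (fun w hw a ha => ?_) hx hc
  have hTspan : Ideal.span (T : Set (MvPowerSeries σ K)) = symbolIdeal d ψ I := hT.symm
  rw [hrange, hTspan]
  exact hJI (wcomp_mem_symbolIdeal hw ha)

theorem isNoetherianRing_of_hasMultiplicativeSymbol [Finite σ] (hinj : Function.Injective ψ)
    (hbdd : ∀ x : B, ∃ c : ℤ, DegBounded K σ d (ψ x) c)
    (hsurj : ∀ f : MvPowerSeries σ K, (∃ c : ℤ, DegBounded K σ d f c) → ∃ x : B, ψ x = f)
    (hsymb : HasMultiplicativeSymbol d ψ) : IsNoetherianRing B := by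
  have hmono : StrictMono (symbolIdeal d ψ) := fun I J hIJ =>
    (symbolIdeal_mono hIJ.le).lt_of_ne fun heq =>
      hIJ.not_ge (le_of_symbolIdeal_le hinj hbdd hsurj hsymb hIJ.le heq.ge)
  have : WellFoundedGT (Ideal (MvPowerSeries σ K)) := isNoetherian_iff'.mp inferInstance
  exact isNoetherian_iff'.mpr hmono.wellFoundedGT

theorem noZeroDivisors_of_hasMultiplicativeSymbol (hinj : Function.Injective ψ)
    (hbdd : ∀ x : B, ∃ c : ℤ, DegBounded K σ d (ψ x) c) (hsymb : HasMultiplicativeSymbol d ψ) :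
    NoZeroDivisors B where
  eq_zero_or_eq_zero_of_mul_eq_zero {u v} huv := by
    by_contra! h
    have top : ∀ x : B, x ≠ 0 → ∃ a, DegBounded K σ d (ψ x) a ∧ wcomp K σ d a (ψ x) ≠ 0 :=
      fun x hx => exists_degBounded_wcomp_ne_zero (hbdd x).choose_spec
        ((map_ne_zero_iff ψ hinj).mpr hx)
    obtain ⟨a, ha, hua⟩ := top u h.1
    obtain ⟨b, hb, hvb⟩ := top v h.2
    have := (hsymb u v a b ha hb).2
    rw [huv, map_zero, wcomp_zero] at this
    exact mul_ne_zero hua hvb this.symm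

end Model

variable (K : Type*) [Field K] (σ : Type*) [Fintype σ]

/-- `ψ` identifies `B` with `A^♥`, the degree-bounded series in `K[[v*]] = MvPowerSeries σ K`;
`hsymb` is the statement that `gr A^♥` embeds multiplicatively into `K[[v*]]`. -/
theorem stmt_10 (B : Type*) [Ring B] [Algebra K B] [Nontrivial B]
    (d : σ → ℤ)
    (ψ : B →ₗ[K] MvPowerSeries σ K) (hinj : Function.Injective ψ)
    (hbdd : ∀ x : B, ∃ c : ℤ, DegBounded K σ d (ψ x) c)
    (hsurj : ∀ f : MvPowerSeries σ K, (∃ c : ℤ, DegBounded K σ d f c) → ∃ x : B, ψ x = f)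
    (hsymb : ∀ (x y : B) (c e : ℤ), DegBounded K σ d (ψ x) c → DegBounded K σ d (ψ y) e →
      DegBounded K σ d (ψ (x * y)) (c + e) ∧
      wcomp K σ d (c + e) (ψ (x * y)) = wcomp K σ d c (ψ x) * wcomp K σ d e (ψ y)) :
    IsNoetherianRing B ∧ IsDomain B := by
  have : NoZeroDivisors B := noZeroDivisors_of_hasMultiplicativeSymbol hinj hbdd hsymb
  exact ⟨isNoetherianRing_of_hasMultiplicativeSymbol hinj hbdd hsurj hsymb,
    NoZeroDivisors.to_isDomain B⟩
end

section
/- Let M be a module over the Weyl algebra W_V ⊗ W (W any unital algebra) on which a lagrangian subspace m ⊂ V acts by locally nilpotent endomorphisms. Then the natural map S(m*) ⊗ M^m → M, p₁⋯p_k ⊗ v ↦ p₁⋯p_k·v, is an isomorphism of modules; in particular M ≅ K[m] ⊗ M^m. -/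
/-!
The number operators `P i * Q i` commute pairwise and act on `P^k v`, for `v ∈ M^m`, by the
scalar `k i`. Hence the subspaces `P^k M^m` lie in distinct joint generalised eigenspaces and are
independent; each `P^k` is injective because `P i` is injective as soon as `Q i` is locally
nilpotent. For spanning, if `q^(d+1) u = 0` then `u - (d!)⁻¹ p^d q^d u` is killed by `q^d`, so every
vector is a sum of vectors `p^n w` with `q w = 0`. The subspaces `⋂_{j ∈ s} ker Q j` are stable
under `P i` and `Q i` for `i ∉ s`, so this can be iterated over the indices.
-/

section MultiPow

variable {ι A : Type*} [Monoid A] {p : ι → A}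

lemma pairwise_commute_pow (hp : ∀ i j, Commute (p i) (p j)) (k : ι →₀ ℕ) (s : Set ι) :
    s.Pairwise (Function.onFun Commute fun i => p i ^ k i) :=
  fun i _ j _ _ => (hp i j).pow_pow _ _

variable (hp : ∀ i j, Commute (p i) (p j))

variable (p) in
def multiPow (k : ι →₀ ℕ) : A :=
  k.support.noncommProd (fun i => p i ^ k i) (pairwise_commute_pow hp k _)

lemma multiPow_eq_noncommProd [DecidableEq ι] {k : ι →₀ ℕ} {s : Finset ι} (hs : k.support ⊆ s) :
    multiPow p hp k = s.noncommProd (fun i => p i ^ k i) (pairwise_commute_pow hp k _) := by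
  have hrest : (s \ k.support).noncommProd (fun i => p i ^ k i)
      (pairwise_commute_pow hp k _) = 1 := by
    refine (Finset.noncommProd_eq_pow_card _ _ _ 1 fun i hi => ?_).trans (one_pow _)
    rw [Finsupp.notMem_support_iff.mp (Finset.mem_sdiff.mp hi).2, pow_zero]
  rw [← Finset.noncommProd_congr (Finset.union_sdiff_of_subset hs) (fun _ _ => rfl)
      (pairwise_commute_pow hp k _),
    Finset.noncommProd_union_of_disjoint Finset.disjoint_sdiff, hrest, mul_one, multiPow]

@[simp] lemma multiPow_zero : multiPow p hp 0 = 1 := Finset.noncommProd_empty _ _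

lemma multiPow_add (a b : ι →₀ ℕ) :
    multiPow p hp (a + b) = multiPow p hp a * multiPow p hp b := by
  classical
  rw [multiPow_eq_noncommProd hp (Finsupp.support_add (g₁ := a) (g₂ := b)),
    multiPow_eq_noncommProd hp (s := a.support ∪ b.support) Finset.subset_union_left,
    multiPow_eq_noncommProd hp (s := a.support ∪ b.support) Finset.subset_union_right,
    ← Finset.noncommProd_mul_distrib (comm_gf := fun i _ j _ _ => (hp i j).pow_pow _ _)]
  simp only [Finsupp.add_apply, pow_add]
  rfl

lemma multiPow_single (i : ι) (n : ℕ) : multiPow p hp (Finsupp.single i n) = p i ^ n := by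
  classical
  rw [multiPow_eq_noncommProd hp (s := {i}) Finsupp.support_single_subset,
    Finset.noncommProd_singleton, Finsupp.single_eq_same]

lemma Commute.multiPow {x : A} {k : ι →₀ ℕ} (h : ∀ i ∈ k.support, Commute x (p i)) :
    Commute x (multiPow p hp k) :=
  Finset.noncommProd_commute _ _ _ _ fun i hi => (h i hi).pow_right _

lemma multiPow_eq_pow_mul_erase [DecidableEq ι] (k : ι →₀ ℕ) (i : ι) :
    multiPow p hp k = p i ^ k i * multiPow p hp (k.erase i) := by
  rw [← multiPow_single hp, ← multiPow_add, Finsupp.single_add_erase]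

end MultiPow

section WeylPair

variable {A : Type*} [Ring A] {p q : A}

lemma mul_pow_succ_of_sub_eq_one (h : q * p - p * q = 1) (n : ℕ) :
    q * p ^ (n + 1) = p ^ (n + 1) * q + (n + 1) • p ^ n := by
  have hqp : q * p = p * q + 1 := sub_eq_iff_eq_add'.mp h
  induction n with
  | zero => simpa using hqp
  | succ n ih =>
    rw [pow_succ p (n + 1), ← mul_assoc, ih, add_mul, mul_assoc, hqp, smul_mul_assoc, ← pow_succ,
      mul_add, ← mul_assoc, ← pow_succ, mul_one, add_assoc, ← succ_nsmul']

-- In `Aᵐᵒᵖ`, the elements `op p` and `op q` satisfy the same relation with their roles exchanged.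
lemma pow_succ_mul_of_sub_eq_one (h : q * p - p * q = 1) (n : ℕ) :
    q ^ (n + 1) * p = p * q ^ (n + 1) + (n + 1) • q ^ n := by
  have hop : MulOpposite.op p * MulOpposite.op q - MulOpposite.op q * MulOpposite.op p = 1 := by
    rw [← MulOpposite.op_mul, ← MulOpposite.op_mul, ← MulOpposite.op_sub, h, MulOpposite.op_one]
  simpa only [MulOpposite.unop_add, MulOpposite.unop_mul, MulOpposite.unop_pow,
    MulOpposite.unop_op, MulOpposite.unop_smul] using
    congrArg MulOpposite.unop (mul_pow_succ_of_sub_eq_one hop n)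

lemma mul_mul_pow_of_sub_eq_one (h : q * p - p * q = 1) (n : ℕ) :
    p * q * p ^ n = p ^ n * (p * q) + n • p ^ n := by
  cases n with
  | zero => simp
  | succ n =>
    rw [mul_assoc, mul_pow_succ_of_sub_eq_one h, mul_add, ← mul_assoc, ← pow_succ',
      mul_smul_comm, ← pow_succ', pow_succ, mul_assoc]

end WeylPair

namespace Module.End

open Set

section CommRing

variable {R M : Type*} [CommRing R] [AddCommGroup M] [Module R M] {p q : End R M}

lemma pow_apply_pow_apply_of_apply_eq_zero (h : q * p - p * q = 1) {y : M} (hy : q y = 0)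
    (n : ℕ) : (q ^ n) ((p ^ n) y) = n.factorial • y := by
  induction n with
  | zero => simp
  | succ n ih =>
    rw [pow_succ q, mul_apply, ← mul_apply q, mul_pow_succ_of_sub_eq_one h, LinearMap.add_apply,
      mul_apply, hy, map_zero, zero_add, LinearMap.smul_apply, map_nsmul, ih, smul_smul,
      Nat.factorial_succ]

lemma mapsTo_pow {f : End R M} {s : Set M} (hf : MapsTo f s s) (n : ℕ) : MapsTo (f ^ n) s s := by
  rw [coe_pow]
  exact hf.iterate n

lemma mapsTo_iInf_ker_of_commute {ι : Type*} {f : End R M} {g : ι → End R M} {s : Set ι}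
    (h : ∀ j ∈ s, Commute f (g j)) :
    MapsTo f (⨅ j ∈ s, LinearMap.ker (g j) : Submodule R M)
      (⨅ j ∈ s, LinearMap.ker (g j) : Submodule R M) := by
  intro v hv
  simp only [SetLike.mem_coe, Submodule.mem_iInf, LinearMap.mem_ker] at hv ⊢
  intro j hj
  rw [← mul_apply, ← (h j hj).eq, mul_apply, hv j hj, map_zero]

end CommRing

variable {K M : Type*} [Field K] [CharZero K] [AddCommGroup M] [Module K M] {p q : End K M}

-- If `p w = 0`, then `q^(n+1) (p w) = (n+1) • q^n w` vanishes: the nilpotency order of `w` drops.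
lemma injective_of_sub_eq_one (h : q * p - p * q = 1) (hq : ∀ v, ∃ n, (q ^ n) v = 0) :
    Function.Injective p := by
  refine (injective_iff_map_eq_zero p).mpr fun w hw => ?_
  obtain ⟨n, hn⟩ := hq w
  induction n with
  | zero => simpa using hn
  | succ n ih =>
    refine ih ?_
    have := congrArg (· w) (pow_succ_mul_of_sub_eq_one h n)
    simp only [mul_apply, hw, map_zero, hn, LinearMap.add_apply, LinearMap.smul_apply,
      zero_add] at this
    rw [← Nat.cast_smul_eq_nsmul K] at this
    exact (smul_eq_zero.mp this.symm).resolve_left (Nat.cast_ne_zero.mpr n.succ_ne_zero)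

lemma mem_iSup_map_pow_inf_ker (h : q * p - p * q = 1) {N : Submodule K M}
    (hpN : MapsTo p N N) (hqN : MapsTo q N N) {u : M} (hu : u ∈ N) {d : ℕ}
    (hdu : (q ^ d) u = 0) : u ∈ ⨆ n, (N ⊓ LinearMap.ker q).map (p ^ n) := by
  induction d generalizing u with
  | zero => simp_all
  | succ d ih =>
    set y := (q ^ d) u
    have hy : y ∈ N ⊓ LinearMap.ker q := Submodule.mem_inf.mpr
      ⟨mapsTo_pow hqN d hu, by rwa [LinearMap.mem_ker, ← mul_apply, ← pow_succ']⟩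
    set c : K := (d.factorial : K)⁻¹
    have hrest : u - c • (p ^ d) y ∈ N :=
      N.sub_mem hu (N.smul_mem c (mapsTo_pow hpN d (Submodule.mem_inf.mp hy).1))
    have hqrest : (q ^ d) (u - c • (p ^ d) y) = 0 := by
      rw [map_sub, map_smul, pow_apply_pow_apply_of_apply_eq_zero h (Submodule.mem_inf.mp hy).2,
        ← Nat.cast_smul_eq_nsmul K, smul_smul,
        inv_mul_cancel₀ (Nat.cast_ne_zero.mpr d.factorial_ne_zero), one_smul, sub_self]
    have hmem : (p ^ d) y ∈ ⨆ n, (N ⊓ LinearMap.ker q).map (p ^ n) :=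
      Submodule.mem_iSup_of_mem d (Submodule.mem_map_of_mem hy)
    simpa using add_mem (ih hrest hqrest) (Submodule.smul_mem _ c hmem)

end Module.End

namespace Heisenberg

open Module End Set

variable {K ι M : Type*} [Field K] [AddCommGroup M] [Module K M] {P Q : ι → End K M}

lemma commute_of_ne [DecidableEq ι]
    (hQP : ∀ i j, Q i * P j - P j * Q i = if i = j then 1 else 0) {i j : ι}
    (hij : i ≠ j) : Commute (Q i) (P j) :=
  sub_eq_zero.mp ((hQP i j).trans (if_neg hij))

lemma sub_eq_one [DecidableEq ι] (hQP : ∀ i j, Q i * P j - P j * Q i = if i = j then 1 else 0)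
    (i : ι) : Q i * P i - P i * Q i = 1 :=
  (hQP i i).trans (if_pos rfl)

variable (Q) in
def vacuum : Submodule K M := ⨅ i, LinearMap.ker (Q i)

lemma apply_eq_zero_of_mem_vacuum {v : M} (hv : v ∈ vacuum Q) (i : ι) : Q i v = 0 :=
  LinearMap.mem_ker.mp (Submodule.mem_iInf _ |>.mp hv i)

variable (hPP : ∀ i j, Commute (P i) (P j))

variable (P Q) in
noncomputable def fockMap : ((ι →₀ ℕ) →₀ vacuum Q) →ₗ[K] M :=
  Finsupp.lsum K fun k => multiPow P hPP k ∘ₗ (vacuum Q).subtype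

@[simp] lemma fockMap_single (k : ι →₀ ℕ) (v : vacuum Q) :
    fockMap P Q hPP (Finsupp.single k v) = multiPow P hPP k v := by
  simp [fockMap]

lemma injective_multiPow [CharZero K] [DecidableEq ι]
    (hQP : ∀ i j, Q i * P j - P j * Q i = if i = j then 1 else 0)
    (hnil : ∀ (v : M) (i : ι), ∃ n : ℕ, ((Q i) ^ n) v = 0) (k : ι →₀ ℕ) :
    Function.Injective ⇑(multiPow P hPP k) :=
  Finset.noncommProd_induction _ _ _ (fun f : End K M => Function.Injective f)
    (fun _ _ ha hb => ha.comp hb) Function.injective_id fun i _ => by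
      rw [coe_pow]
      exact (injective_of_sub_eq_one (sub_eq_one hQP i) (hnil · i)).iterate _

variable [DecidableEq ι] (hQP : ∀ i j, Q i * P j - P j * Q i = if i = j then 1 else 0)
include hPP hQP

lemma mul_apply_multiPow_apply {i : ι} {v : M} (hv : Q i v = 0) (k : ι →₀ ℕ) :
    (P i * Q i) (multiPow P hPP k v) = (k i : K) • multiPow P hPP k v := by
  have hR : Commute (P i * Q i) (multiPow P hPP (k.erase i)) := by
    refine Commute.multiPow hPP fun j hj => ?_
    have hji : j ≠ i := by simp_all
    exact (hPP i j).mul_left (commute_of_ne hQP hji.symm)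
  rw [multiPow_eq_pow_mul_erase hPP k i, ← mul_apply, ← mul_assoc,
    mul_mul_pow_of_sub_eq_one (sub_eq_one hQP i), add_mul, mul_assoc, hR.eq]
  simp [hv, Nat.cast_smul_eq_nsmul]

lemma commute_mul_mul (hQQ : ∀ i j, Commute (Q i) (Q j)) (i j : ι) :
    Commute (P i * Q i) (P j * Q j) := by
  obtain rfl | hij := eq_or_ne i j
  · rfl
  refine Commute.mul_right ((hPP i j).mul_left (commute_of_ne hQP hij)) ?_
  exact (commute_of_ne hQP hij.symm).symm.mul_left (hQQ i j)

lemma fockMap_injective [CharZero K] (hQQ : ∀ i j, Commute (Q i) (Q j))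
    (hnil : ∀ (v : M) (i : ι), ∃ n : ℕ, ((Q i) ^ n) v = 0) :
    Function.Injective (fockMap P Q hPP) := by
  have hindχ : iSupIndep fun χ : ι → K => ⨅ i, (P i * Q i).maxGenEigenspace (χ i) :=
    independent_iInf_maxGenEigenspace_of_forall_mapsTo _ fun i j μ =>
      mapsTo_maxGenEigenspace_of_comm (commute_mul_mul hPP hQP hQQ j i) μ
  have hcast : Function.Injective fun (k : ι →₀ ℕ) (i : ι) => (k i : K) :=
    fun k₁ k₂ h => Finsupp.ext fun i => Nat.cast_injective (congrFun h i)
  have hind : iSupIndep fun k : ι →₀ ℕ => ⨅ i, (P i * Q i).maxGenEigenspace (k i : K) :=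
    hindχ.comp hcast
  have hmem (k : ι →₀ ℕ) (v : vacuum Q) :
      multiPow P hPP k v ∈ ⨅ i, (P i * Q i).maxGenEigenspace (k i : K) :=
    Submodule.mem_iInf _ |>.mpr fun i => eigenspace_le_maxGenEigenspace <| mem_eigenspace_iff.mpr <|
      mul_apply_multiPow_apply hPP hQP (apply_eq_zero_of_mem_vacuum v.2 i) k
  refine (injective_iff_map_eq_zero _).mpr fun x hx => Finsupp.ext fun k => ?_
  by_cases hk : k ∈ x.support
  · rw [fockMap, Finsupp.lsum_apply, Finsupp.sum] at hx
    have := (iSupIndep_iff_finsetSum_eq_zero_imp_eq_zero _).mp hind x.support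
      (fun k => multiPow P hPP k (x k)) (fun k _ => hmem k (x k)) hx k hk
    exact Subtype.ext (injective_multiPow hPP hQP hnil k (this.trans (map_zero _).symm))
  · exact Finsupp.notMem_support_iff.mp hk

lemma iSup_map_multiPow_biInf_ker_eq_top [CharZero K] (hQQ : ∀ i j, Commute (Q i) (Q j))
    (hnil : ∀ (v : M) (i : ι), ∃ n : ℕ, ((Q i) ^ n) v = 0) (s : Finset ι) :
    ⨆ k, (⨅ j ∈ s, LinearMap.ker (Q j)).map (multiPow P hPP k) = ⊤ := by
  induction s using Finset.induction_on with
  | empty => exact eq_top_iff.mpr (le_iSup_of_le 0 (by simp [one_eq_id]))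
  | insert i s hi ih =>
    set N := ⨅ j ∈ s, LinearMap.ker (Q j)
    have hN : N ≤ ⨆ n, (N ⊓ LinearMap.ker (Q i)).map (P i ^ n) := fun u hu => by
      obtain ⟨d, hd⟩ := hnil u i
      refine mem_iSup_map_pow_inf_ker (sub_eq_one hQP i) ?_ ?_ hu hd
      · exact mapsTo_iInf_ker_of_commute fun j hj =>
          (commute_of_ne hQP (ne_of_mem_of_not_mem hj hi)).symm
      · exact mapsTo_iInf_ker_of_commute fun j _ => hQQ i j
    refine eq_top_iff.mpr (ih ▸ iSup_le fun k => ?_)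
    calc N.map (multiPow P hPP k)
        ≤ (⨆ n, (N ⊓ LinearMap.ker (Q i)).map (P i ^ n)).map (multiPow P hPP k) :=
          Submodule.map_mono hN
      _ = ⨆ n, (N ⊓ LinearMap.ker (Q i)).map (multiPow P hPP (k + Finsupp.single i n)) := by
          simp only [Submodule.map_iSup, ← Submodule.map_comp, multiPow_add, multiPow_single,
            mul_eq_comp]
      _ ≤ _ := iSup_le fun n => le_iSup_of_le (k + Finsupp.single i n) <| by
          rw [Finset.iInf_insert, inf_comm]

lemma fockMap_surjective [CharZero K] [Fintype ι] (hQQ : ∀ i j, Commute (Q i) (Q j))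
    (hnil : ∀ (v : M) (i : ι), ∃ n : ℕ, ((Q i) ^ n) v = 0) :
    Function.Surjective (fockMap P Q hPP) := by
  rw [← LinearMap.range_eq_top, eq_top_iff,
    ← iSup_map_multiPow_biInf_ker_eq_top hPP hQP hQQ hnil Finset.univ]
  refine iSup_le fun k => ?_
  rintro _ ⟨v, hv, rfl⟩
  have hv' : v ∈ vacuum Q := by simpa [vacuum] using hv
  exact ⟨Finsupp.single k ⟨v, hv'⟩, fockMap_single hPP k _⟩

end Heisenberg

/-- Structure theorem for modules over a Weyl algebra (Heisenberg representations): if `M` is a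
module over `W_V ⊗ W` (encoded by commuting families `P i`, `Q i` of operators satisfying the
canonical commutation relations for a lagrangian splitting `V = m ⊕ m*`, together with arbitrary
operators `T` commuting with them) on which the lagrangian subspace `m` (spanned by the `Q i`)
acts by locally nilpotent endomorphisms, then the natural map `S(m*) ⊗ M^m → M`,
`p₁⋯p_k ⊗ v ↦ p₁⋯p_k · v`, is an isomorphism of modules; in particular `M ≅ K[m] ⊗ M^m`. -/
theorem stmt_12 (K : Type*) [Field K] [CharZero K] (ι : Type*) [Fintype ι] [DecidableEq ι]
    (M : Type*) [AddCommGroup M] [Module K M]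
    (P Q : ι → Module.End K M)
    (hPP : ∀ i j, Commute (P i) (P j))
    (hQQ : ∀ i j, Commute (Q i) (Q j))
    (hQP : ∀ i j, Q i * P j - P j * Q i = if i = j then (1 : Module.End K M) else 0)
    (hnil : ∀ (v : M) (i : ι), ∃ n : ℕ, ((Q i) ^ n) v = 0) :
    -- `Minv = M^m` is the subspace annihilated by `m`; `opk k = ∏ᵢ (P i)^(k i)`;
    -- `Φ` is the natural map `S(m*) ⊗ M^m → M`.
    let Minv : Submodule K M := ⨅ i, LinearMap.ker (Q i)
    let opk : (ι →₀ ℕ) → Module.End K M := fun k =>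
      k.support.noncommProd (fun i => P i ^ k i)
        (fun i _ j _ _ => (hPP i j).pow_pow _ _)
    let Φ : ((ι →₀ ℕ) →₀ ↥Minv) →ₗ[K] M :=
      Finsupp.lsum K fun k => (opk k) ∘ₗ Minv.subtype
    Function.Bijective Φ ∧
    -- the isomorphism is equivariant for every operator `T` commuting with the Weyl algebra
    -- action (so it is an isomorphism of `W_V ⊗ W`-modules)
    (∀ T : Module.End K M, (∀ i, Commute T (P i) ∧ Commute T (Q i)) →
      (∀ v ∈ Minv, T v ∈ Minv) ∧
      ∀ (k : ι →₀ ℕ) (v : ↥Minv),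
        T (Φ (Finsupp.single k v)) = (opk k) (T (v : M))) := by
  intro Minv opk Φ
  refine ⟨⟨Heisenberg.fockMap_injective hPP hQP hQQ hnil,
    Heisenberg.fockMap_surjective hPP hQP hQQ hnil⟩,
    fun T hT => ⟨fun v hv => ?_, fun k v => ?_⟩⟩
  · have hT_ker := Module.End.mapsTo_iInf_ker_of_commute (s := Set.univ) fun j _ => (hT j).2
    simp only [Set.mem_univ, iInf_pos] at hT_ker
    exact hT_ker hv
  · rw [Finsupp.lsum_single]
    exact LinearMap.congr_fun (Commute.multiPow hPP fun j _ => (hT j).1).eq v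
end
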